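/- Let d ≥ 1, T > 0, δ > 0 and ε ∈ (0, 1/2). Let w : [0,T] → ℝ^d be a measurable path admitting a local time L such that ‖L_t − L_s‖_{L²(ℝ^d)} ≤ C_L |t−s|^{1/2+ε} for all 0 ≤ s ≤ t ≤ T and some constant C_L > 0. Let V ∈ L²(ℝ^d) satisfy ‖V‖_{H^{max(1, d/2)+δ}} < ∞ (so V has a bounded continuous representative, again denoted V). Let (W_t)_{t≥0} be a standard d-dimensional Brownian motion. Then almost surely, for every t ∈ [0,T]: writing L_{s,r} := L_r − L_s, the germ A^t on {(s,r) : 0 ≤ s ≤ r ≤ t} defined by A^t_{s,r} := (V * L_{s,r})(W_{t−s}) admits a sewing IA^t (its Riemann sums along any sequence of partitions of [0,t] with mesh tending to 0 converge), and this sewing satisfies (IA^t)_t = ∫_0^t V(W_{t−s} − w_s) ds. -/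

import Mathlib

/-!
By the occupation-times formula the germ is itself a time integral along `w`:
`(V * L_{a,b})(W_{t-a}) = ∫_a^b V(W_{t-a} - w_u) du`. A Riemann sum of the germ is therefore
`∫_s^r V(W_{t-a(u)} - w_u) du`, where `a(u)` is the left end of the cell containing `u`.
As the mesh tends to `0`, `a(u) → u`, so by continuity of the Brownian path and dominated
convergence (`V` is bounded) the sums converge to `∫_s^r V(W_{t-u} - w_u) du`, the increment of
`IA_r := ∫_0^r V(W_{t-u} - w_u) du`.
-/

open MeasureTheory ProbabilityTheory Filter
open scoped ENNReal FourierTransform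

/-- A partition of the interval `[s, t]` into finitely many consecutive subintervals. -/
structure IntervalPartition (s t : ℝ) where
  n : ℕ
  pts : Fin (n + 1) → ℝ
  mono : Monotone pts
  first : pts 0 = s
  last : pts (Fin.last n) = t

/-- The mesh of a partition. -/
noncomputable def IntervalPartition.mesh {s t : ℝ} (P : IntervalPartition s t) : ℝ :=
  ⨆ i : Fin P.n, (P.pts i.succ - P.pts i.castSucc)

/-- The Riemann sum of a germ `A` along a partition `P` of `[s, t]`. -/
noncomputable def riemannSum {s t : ℝ} (A : ℝ → ℝ → ℝ) (P : IntervalPartition s t) : ℝ :=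
  ∑ i : Fin P.n, A (P.pts i.castSucc) (P.pts i.succ)

/-- The (inhomogeneous) Sobolev norm of order `s` of `g : ℝ^d → ℝ`, via the Fourier
transform, as a value in `[0,∞]`. -/
noncomputable def sobolevNorm (d : ℕ) (s : ℝ) (g : EuclideanSpace ℝ (Fin d) → ℝ) : ℝ≥0∞ :=
  (∫⁻ ξ : EuclideanSpace ℝ (Fin d),
      ENNReal.ofReal
        ((1 + ‖ξ‖) ^ (2 * s) *
          ‖𝓕 (fun x => (g x : ℂ)) ξ‖ ^ 2)) ^ (1 / 2 : ℝ)

/-- `L` is a local time for the measurable path `w`. -/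
structure IsLocalTime (d : ℕ) (T : ℝ) (w : ℝ → EuclideanSpace ℝ (Fin d))
    (L : ℝ → EuclideanSpace ℝ (Fin d) → ℝ) : Prop where
  meas_path : Measurable w
  nonneg : ∀ t z, 0 ≤ L t z
  meas : Measurable (Function.uncurry L)
  occupation : ∀ t ∈ Set.Icc (0 : ℝ) T, ∀ A : Set (EuclideanSpace ℝ (Fin d)),
    MeasurableSet A →
      volume {s : ℝ | s ∈ Set.Icc 0 t ∧ w s ∈ A} = ∫⁻ z in A, ENNReal.ofReal (L t z)

/-- `B` is a standard `d`-dimensional Brownian motion under `P`. -/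
structure IsBrownianMotion (d : ℕ) {Ω : Type*} [MeasurableSpace Ω] (P : Measure Ω)
    (B : ℝ → Ω → EuclideanSpace ℝ (Fin d)) : Prop where
  isProb : IsProbabilityMeasure P
  meas : ∀ t : ℝ, Measurable (B t)
  cont : ∀ ω, Continuous fun t => B t ω
  start : ∀ ω, B 0 ω = 0
  indep : ∀ (n : ℕ) (t : ℕ → ℝ), Monotone t → (∀ i, 0 ≤ t i) →
    iIndepFun
      (fun i : Fin n => fun ω => B (t (i + 1)) ω - B (t i) ω) P
  gauss : ∀ s t : ℝ, 0 ≤ s → s ≤ t →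
    Measure.map (fun ω => fun i : Fin d => B t ω i - B s ω i) P =
      Measure.pi fun _ : Fin d => gaussianReal 0 (t - s).toNNReal

open Set Topology

lemma exists_mem_Ioc_castSucc_succ {α : Type*} [LinearOrder α] :
    ∀ {n : ℕ} (f : Fin (n + 1) → α) {u : α}, f 0 < u → u ≤ f (Fin.last n) →
      ∃ i : Fin n, u ∈ Ioc (f i.castSucc) (f i.succ)
  | 0, _, _, h0, hn => absurd hn (not_le.2 h0)
  | n + 1, f, u, h0, hn => by
    by_cases hu : u ≤ f (Fin.last n).castSucc
    · obtain ⟨i, hi⟩ := exists_mem_Ioc_castSucc_succ (f ∘ Fin.castSucc) h0 hu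
      exact ⟨i.castSucc, hi⟩
    · exact ⟨Fin.last n, not_le.1 hu, hn⟩

lemma intervalIntegrable_of_norm_le {E : Type*} [NormedAddCommGroup E] {f : ℝ → E} {M : ℝ}
    (hf : AEStronglyMeasurable f) (hM : ∀ x, ‖f x‖ ≤ M) (a b : ℝ) :
    IntervalIntegrable f volume a b :=
  (intervalIntegrable_const (c := M)).mono_fun hf.restrict
    (ae_of_all _ fun x => (hM x).trans (le_abs_self M))

namespace IntervalPartition

variable {s r : ℝ} (P : IntervalPartition s r)

lemma pts_mem_Icc (i : Fin (P.n + 1)) : P.pts i ∈ Icc s r :=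
  ⟨P.first.symm.le.trans (P.mono (Fin.zero_le i)), (P.mono (Fin.le_last i)).trans P.last.le⟩

lemma le (P : IntervalPartition s r) : s ≤ r :=
  (P.pts_mem_Icc 0).1.trans (P.pts_mem_Icc 0).2

lemma Ioc_subset (i : Fin P.n) : Ioc (P.pts i.castSucc) (P.pts i.succ) ⊆ Ioc s r :=
  Ioc_subset_Ioc (P.pts_mem_Icc _).1 (P.pts_mem_Icc _).2

lemma sub_le_mesh (i : Fin P.n) : P.pts i.succ - P.pts i.castSucc ≤ P.mesh :=
  le_ciSup (f := fun i : Fin P.n => P.pts i.succ - P.pts i.castSucc) (finite_range _).bddAbove i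

lemma pairwise_disjoint_Ioc :
    Pairwise (Function.onFun Disjoint fun i : Fin P.n => Ioc (P.pts i.castSucc) (P.pts i.succ)) :=
  (pairwise_disjoint_on _).2 fun _ _ hij =>
    disjoint_iff_inf_le.mpr fun _ ⟨⟨_, h₁⟩, ⟨h₂, _⟩⟩ =>
      h₂.not_ge <| h₁.trans <| P.mono <| Fin.succ_le_castSucc_iff.2 hij

/-- The step function `u ↦ g a u`, where `a` is the left end of the cell of `P` containing `u`
(and `0` outside `(s, r]`). -/
noncomputable def leftEndpointEval (g : ℝ → ℝ → ℝ) (u : ℝ) : ℝ :=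
  ∑ i : Fin P.n, (Ioc (P.pts i.castSucc) (P.pts i.succ)).indicator (g (P.pts i.castSucc)) u

lemma exists_leftEndpointEval_eq (g : ℝ → ℝ → ℝ) {u : ℝ} (hu : u ∈ Ioc s r) :
    ∃ a ∈ Ico (u - P.mesh) u, P.leftEndpointEval g u = g a u := by
  obtain ⟨i, hi⟩ := exists_mem_Ioc_castSucc_succ P.pts
    (by rw [P.first]; exact hu.1) (by rw [P.last]; exact hu.2)
  refine ⟨P.pts i.castSucc, ⟨by linarith [P.sub_le_mesh i, hi.2], hi.1⟩, ?_⟩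
  rw [leftEndpointEval, Finset.sum_eq_single_of_mem i (Finset.mem_univ _) fun j _ hji =>
    indicator_of_notMem (fun hj => (P.pairwise_disjoint_Ioc hji).ne_of_mem hj hi rfl) _]
  exact indicator_of_mem hi _

lemma riemannSum_eq_setIntegral_leftEndpointEval {A g : ℝ → ℝ → ℝ} {M : ℝ}
    (hg_meas : ∀ a, Measurable (g a)) (hg_bound : ∀ a u, ‖g a u‖ ≤ M)
    (hA : ∀ a b, s ≤ a → a ≤ b → b ≤ r → A a b = ∫ u in a..b, g a u) :
    riemannSum A P = ∫ u in Ioc s r, P.leftEndpointEval g u := by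
  have hint : ∀ a, IntegrableOn (g a) (Ioc s r) :=
    fun a => Measure.integrableOn_of_bounded measure_Ioc_lt_top.ne
      (hg_meas a).aestronglyMeasurable (ae_of_all _ (hg_bound a))
  simp only [leftEndpointEval]
  rw [integral_finsetSum _ fun i _ => (hint _).indicator measurableSet_Ioc]
  refine Finset.sum_congr rfl fun i _ => ?_
  have hi : P.pts i.castSucc ≤ P.pts i.succ := P.mono (Fin.castSucc_le_succ i)
  rw [hA _ _ (P.pts_mem_Icc _).1 hi (P.pts_mem_Icc _).2, intervalIntegral.integral_of_le hi,
    integral_indicator measurableSet_Ioc, Measure.restrict_restrict measurableSet_Ioc,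
    inter_eq_left.2 (P.Ioc_subset i)]

end IntervalPartition

theorem tendsto_riemannSum_of_eq_intervalIntegral {s r M : ℝ} {A g : ℝ → ℝ → ℝ}
    (hg_meas : ∀ a, Measurable (g a)) (hg_bound : ∀ a u, ‖g a u‖ ≤ M)
    (hg_cont : ∀ u ∈ Ioc s r, ContinuousWithinAt (g · u) (Iio u) u)
    (hA : ∀ a b, s ≤ a → a ≤ b → b ≤ r → A a b = ∫ u in a..b, g a u)
    {Pseq : ℕ → IntervalPartition s r} (hmesh : Tendsto (fun k => (Pseq k).mesh) atTop (𝓝 0)) :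
    Tendsto (fun k => riemannSum A (Pseq k)) atTop (𝓝 (∫ u in s..r, g u u)) := by
  simp_rw [fun k => (Pseq k).riemannSum_eq_setIntegral_leftEndpointEval hg_meas hg_bound hA,
    intervalIntegral.integral_of_le (Pseq 0).le]
  refine tendsto_integral_of_dominated_convergence (fun _ => M) (fun k => ?_)
    (integrableOn_const measure_Ioc_lt_top.ne) (fun k => ?_) ?_
  · exact (Finset.measurable_sum _ fun i _ =>
      (hg_meas _).indicator measurableSet_Ioc).aestronglyMeasurable
  · filter_upwards [ae_restrict_mem measurableSet_Ioc] with u hu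
    obtain ⟨a, -, ha⟩ := (Pseq k).exists_leftEndpointEval_eq g hu
    exact ha ▸ hg_bound a u
  · filter_upwards [ae_restrict_mem measurableSet_Ioc] with u hu
    choose a ha hga using fun k => (Pseq k).exists_leftEndpointEval_eq g hu
    have ha_lim : Tendsto a atTop (𝓝[<] u) := by
      refine tendsto_nhdsWithin_iff.2 ⟨?_, Eventually.of_forall fun k => (ha k).2⟩
      refine tendsto_of_tendsto_of_tendsto_of_le_of_le ?_ tendsto_const_nhds
        (fun k => (ha k).1) fun k => (ha k).2.le
      simpa using tendsto_const_nhds.sub hmesh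
    exact ((hg_cont u hu).tendsto.comp ha_lim).congr fun k => (hga k).symm

namespace IsLocalTime

variable {d : ℕ} {T t : ℝ} {w : ℝ → EuclideanSpace ℝ (Fin d)}
  {L : ℝ → EuclideanSpace ℝ (Fin d) → ℝ}

lemma map_restrict_Icc (hL : IsLocalTime d T w L) (ht : t ∈ Icc 0 T) :
    (volume.restrict (Icc 0 t)).map w = volume.withDensity fun z => ENNReal.ofReal (L t z) := by
  ext A hA
  rw [Measure.map_apply hL.meas_path hA, Measure.restrict_apply' measurableSet_Icc,
    withDensity_apply _ hA, ← hL.occupation t ht A hA, inter_comm]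
  rfl

lemma measurable_apply (hL : IsLocalTime d T w L) (t : ℝ) : Measurable (L t) :=
  hL.meas.comp measurable_prodMk_left

lemma integrable (hL : IsLocalTime d T w L) (ht : t ∈ Icc 0 T) : Integrable (L t) := by
  refine ⟨(hL.measurable_apply t).aestronglyMeasurable,
    (hasFiniteIntegral_iff_ofReal (ae_of_all _ (hL.nonneg t))).2 ?_⟩
  rw [← setLIntegral_univ, ← withDensity_apply _ MeasurableSet.univ, ← hL.map_restrict_Icc ht,
    Measure.map_apply hL.meas_path MeasurableSet.univ, preimage_univ, Measure.restrict_apply_univ]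
  exact measure_Icc_lt_top

lemma setIntegral_Icc_comp (hL : IsLocalTime d T w L) {f : EuclideanSpace ℝ (Fin d) → ℝ}
    (hf : Measurable f) (ht : t ∈ Icc 0 T) :
    ∫ u in Icc 0 t, f (w u) = ∫ z, f z * L t z := by
  rw [← integral_map hL.meas_path.aemeasurable hf.aestronglyMeasurable, hL.map_restrict_Icc ht,
    integral_withDensity_eq_integral_toReal_smul (hL.measurable_apply t).ennreal_ofReal
      (ae_of_all _ fun _ => ENNReal.ofReal_lt_top)]
  simp_rw [ENNReal.toReal_ofReal (hL.nonneg t _), smul_eq_mul, mul_comm]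

lemma integral_mul_sub_eq_intervalIntegral (hL : IsLocalTime d T w L)
    {f : EuclideanSpace ℝ (Fin d) → ℝ} {M : ℝ} (hf : Measurable f) (hfM : ∀ z, ‖f z‖ ≤ M)
    {a b : ℝ} (ha : 0 ≤ a) (hab : a ≤ b) (hb : b ≤ T) :
    ∫ z, f z * (L b z - L a z) = ∫ u in a..b, f (w u) := by
  have hfL : ∀ c ∈ Icc 0 T, Integrable fun z => f z * L c z := fun c hc =>
    (hL.integrable hc).bdd_mul hf.aestronglyMeasurable (ae_of_all _ hfM)
  have hfw : ∀ c, IntervalIntegrable (fun u => f (w u)) volume 0 c :=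
    intervalIntegrable_of_norm_le (hf.comp hL.meas_path).aestronglyMeasurable (fun u => hfM _) 0
  have occupation : ∀ c ∈ Icc 0 T, ∫ u in 0..c, f (w u) = ∫ z, f z * L c z := fun c hc => by
    rw [intervalIntegral.integral_of_le hc.1, ← integral_Icc_eq_integral_Ioc,
      hL.setIntegral_Icc_comp hf hc]
  have hbT : b ∈ Icc 0 T := ⟨ha.trans hab, hb⟩
  have haT : a ∈ Icc 0 T := ⟨ha, hab.trans hb⟩
  simp_rw [mul_sub]
  rw [integral_sub (hfL b hbT) (hfL a haT), ← occupation b hbT, ← occupation a haT,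
    intervalIntegral.integral_interval_sub_left (hfw b) (hfw a)]

theorem tendsto_riemannSum_convolution (hL : IsLocalTime d T w L)
    {V : EuclideanSpace ℝ (Fin d) → ℝ} (hVc : Continuous V) {M : ℝ} (hM : ∀ x, |V x| ≤ M)
    {γ : ℝ → EuclideanSpace ℝ (Fin d)} (hγ : Continuous γ) {s r : ℝ} (hs : 0 ≤ s) (hr : r ≤ T)
    {Pseq : ℕ → IntervalPartition s r} (hmesh : Tendsto (fun k => (Pseq k).mesh) atTop (𝓝 0)) :
    Tendsto (fun k => riemannSum (fun a b => ∫ z, V (γ a - z) * (L b z - L a z)) (Pseq k))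
      atTop (𝓝 (∫ u in s..r, V (γ u - w u))) :=
  tendsto_riemannSum_of_eq_intervalIntegral (g := fun a u => V (γ a - w u))
    (fun _ => hVc.measurable.comp (measurable_const.sub hL.meas_path)) (fun _ _ => hM _)
    (fun _ _ => (hVc.comp (hγ.sub continuous_const)).continuousWithinAt)
    (fun _ _ ha hab hb => hL.integral_mul_sub_eq_intervalIntegral
      (hVc.comp (continuous_const.sub continuous_id)).measurable (fun _ => hM _)
      (hs.trans ha) hab (hb.trans hr))
    hmesh

end IsLocalTime

theorem riemann_integral_as_sewing_general (d : ℕ) (T : ℝ)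
    (w : ℝ → EuclideanSpace ℝ (Fin d)) (L : ℝ → EuclideanSpace ℝ (Fin d) → ℝ)
    (hL : IsLocalTime d T w L)
    (V : EuclideanSpace ℝ (Fin d) → ℝ) (hVc : Continuous V) (hVb : ∃ M : ℝ, ∀ x, |V x| ≤ M)
    {Ω : Type*} [MeasurableSpace Ω] (P : Measure Ω)
    (W : ℝ → Ω → EuclideanSpace ℝ (Fin d)) (hW : IsBrownianMotion d P W) :
    ∀ᵐ ω ∂P, ∀ t ∈ Set.Icc (0 : ℝ) T,
      ∃ IA : ℝ → ℝ,
        IA 0 = 0 ∧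
        (∀ s r : ℝ, 0 ≤ s → s ≤ r → r ≤ t →
          ∀ Pseq : ℕ → IntervalPartition s r,
            Tendsto (fun k => (Pseq k).mesh) atTop (nhds 0) →
            Tendsto
              (fun k =>
                riemannSum
                  (fun s' r' => ∫ z, V (W (t - s') ω - z) * (L r' z - L s' z))
                  (Pseq k))
              atTop (nhds (IA r - IA s))) ∧
        IA t = ∫ s in (0 : ℝ)..t, V (W (t - s) ω - w s) := by
  obtain ⟨M, hM⟩ := hVb
  refine Eventually.of_forall fun ω t ht => ?_
  have hγ : Continuous fun a => W (t - a) ω := (hW.cont ω).comp (continuous_const.sub continuous_id)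
  have hG : ∀ r, IntervalIntegrable (fun u => V (W (t - u) ω - w u)) volume 0 r :=
    intervalIntegrable_of_norm_le
      (hVc.measurable.comp (hγ.measurable.sub hL.meas_path)).aestronglyMeasurable
      (fun u => hM _) 0
  refine ⟨fun r => ∫ u in (0 : ℝ)..r, V (W (t - u) ω - w u), intervalIntegral.integral_same,
    fun s r hs _ hrt Pseq hmesh => ?_, rfl⟩
  rw [intervalIntegral.integral_interval_sub_left (hG r) (hG s)]
  exact hL.tendsto_riemannSum_convolution hVc hM hγ hs (hrt.trans ht.2) hmesh

/-- **Identification of the Riemann integral as a sewing.** Let `w : [0,T] → ℝ^d` be a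
measurable path with a local time `L` whose increments satisfy
`‖L_t - L_s‖_{L²} ≤ C_L |t-s|^{1/2+ε}`, and let `V ∈ L²` be bounded and continuous with
`‖V‖_{H^{max(1,d/2)+δ}} < ∞`. Let `W` be a standard `d`-dimensional Brownian motion.
Then almost surely, for every `t ∈ [0,T]`, the germ
`A^t_{s,r} = (V * L_{s,r})(W_{t-s})` admits a sewing `IA^t` on `[0,t]` (its Riemann sums
along any sequence of partitions with mesh tending to `0` converge), and
`(IA^t)_t = ∫_0^t V(W_{t-s} - w_s) ds`. -/
theorem riemann_integral_as_sewing (d : ℕ) (hd : 1 ≤ d) (T : ℝ) (hT : 0 < T)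
    (δ ε : ℝ) (hδ : 0 < δ) (hε0 : 0 < ε) (hε1 : ε < 1 / 2)
    (w : ℝ → EuclideanSpace ℝ (Fin d)) (L : ℝ → EuclideanSpace ℝ (Fin d) → ℝ)
    (hL : IsLocalTime d T w L)
    (C_L : ℝ) (hCL : 0 < C_L)
    (hLhold : ∀ s t : ℝ, 0 ≤ s → s ≤ t → t ≤ T →
      eLpNorm (fun z => L t z - L s z) 2 volume ≤
        ENNReal.ofReal (C_L * (t - s) ^ (1 / 2 + ε)))
    (V : EuclideanSpace ℝ (Fin d) → ℝ) (hVc : Continuous V) (hVb : ∃ M : ℝ, ∀ x, |V x| ≤ M)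
    (hVL2 : MemLp V 2 volume)
    (hVH : sobolevNorm d (max 1 ((d : ℝ) / 2) + δ) V < ∞)
    {Ω : Type*} [MeasurableSpace Ω] (P : Measure Ω)
    (W : ℝ → Ω → EuclideanSpace ℝ (Fin d)) (hW : IsBrownianMotion d P W) :
    ∀ᵐ ω ∂P, ∀ t ∈ Set.Icc (0 : ℝ) T,
      ∃ IA : ℝ → ℝ,
        IA 0 = 0 ∧
        (∀ s r : ℝ, 0 ≤ s → s ≤ r → r ≤ t →
          ∀ Pseq : ℕ → IntervalPartition s r,
            Tendsto (fun k => (Pseq k).mesh) atTop (nhds 0) →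
            Tendsto
              (fun k =>
                riemannSum
                  (fun s' r' => ∫ z, V (W (t - s') ω - z) * (L r' z - L s' z))
                  (Pseq k))
              atTop (nhds (IA r - IA s))) ∧
        IA t = ∫ s in (0 : ℝ)..t, V (W (t - s) ω - w s) :=
  riemann_integral_as_sewing_general d T w L hL V hVc hVb P W hW
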